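/- Let P be a Poisson n-Lie algebra. Define the lower central series P¹ = P, P^{k+1} = [P^k, P, P, …, P] + P^k · P. Then for all i, j ≥ 1, P^i · P^j ⊆ P^{i+j}. -/

import Mathlib

/-- Span of brackets with the first entry running over `S`. -/
def bk1 (F : Type*) {P : Type*} [Field F] [CommRing P] [Algebra F P] {m : ℕ}
    (br : (Fin (m + 2) → P) → P) (S : Submodule F P) : Submodule F P :=
  Submodule.span F {z | ∃ x : Fin (m + 2) → P, x 0 ∈ S ∧ z = br x}

/-- Lower central series of a Poisson `n`-Lie algebra (0-indexed):
`lcs 0 = P¹ = P`, `lcs k = P^{k+1} = [P^k, P, …, P] + P^k · P`. -/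
def lcs (F : Type*) {P : Type*} [Field F] [CommRing P] [Algebra F P] {m : ℕ}
    (br : (Fin (m + 2) → P) → P) : ℕ → Submodule F P
  | 0 => ⊤
  | k + 1 => bk1 F br (lcs F br k) ⊔ lcs F br k * ⊤

/-!
Induction on `i`. The term `P^i · P · P^j` is absorbed by the inductive hypothesis, and for a
bracket `[a, x₁, …, x_{n-1}]` with `a ∈ P^i` and `b ∈ P^j` the Leibniz rule gives
`[a, x₁, …] · b = [a b, x₁, …] - a · [b, x₁, …]`, where `a b ∈ P^{i+j}` and
`[b, x₁, …] ∈ P^{j+1}`, so both terms lie in `P^{i+j+1}` by induction.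
-/

section Bracket

variable {F P : Type*} [Field F] [CommRing P] [Algebra F P] {m : ℕ}
  (br : (Fin (m + 2) → P) → P)

theorem br_mem_bk1 {S : Submodule F P} {x : Fin (m + 2) → P} (hx : x 0 ∈ S) :
    br x ∈ bk1 F br S :=
  Submodule.subset_span ⟨x, hx, rfl⟩

theorem bk1_mono {S T : Submodule F P} (hST : S ≤ T) : bk1 F br S ≤ bk1 F br T :=
  Submodule.span_mono fun _ ⟨x, hx, hz⟩ => ⟨x, hST hx, hz⟩

theorem br_mul_eq_of_leibniz
    (hLeib : ∀ (u v : P) (x : Fin (m + 1) → P),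
      br (Fin.cons (u * v) x) = u * br (Fin.cons v x) + v * br (Fin.cons u x))
    (x : Fin (m + 2) → P) (b : P) :
    br x * b = br (Fin.cons (x 0 * b) (Fin.tail x)) - x 0 * br (Fin.cons b (Fin.tail x)) := by
  conv_lhs => rw [← Fin.cons_self_tail x]
  rw [hLeib]
  ring

theorem bk1_mul_le_of_leibniz
    (hLeib : ∀ (u v : P) (x : Fin (m + 1) → P),
      br (Fin.cons (u * v) x) = u * br (Fin.cons v x) + v * br (Fin.cons u x))
    (S T : Submodule F P) :
    bk1 F br S * T ≤ bk1 F br (S * T) ⊔ S * bk1 F br T := by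
  rw [Submodule.mul_le]
  intro z hz b hb
  induction hz using Submodule.span_induction with
  | mem z hmem =>
    obtain ⟨x, hx0, rfl⟩ := hmem
    rw [br_mul_eq_of_leibniz br hLeib]
    refine sub_mem (Submodule.mem_sup_left ?_) (Submodule.mem_sup_right ?_)
    · exact br_mem_bk1 br (by simpa using Submodule.mul_mem_mul hx0 hb)
    · exact Submodule.mul_mem_mul hx0 (br_mem_bk1 br (by simpa using hb))
  | zero => simp
  | add x y _ _ hx hy => rw [add_mul]; exact add_mem hx hy
  | smul c x _ hx => rw [smul_mul_assoc]; exact Submodule.smul_mem _ _ hx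

theorem lcs_succ (k : ℕ) : lcs F br (k + 1) = bk1 F br (lcs F br k) ⊔ lcs F br k * ⊤ := rfl

theorem bk1_lcs_le_lcs_succ (k : ℕ) : bk1 F br (lcs F br k) ≤ lcs F br (k + 1) :=
  le_sup_left

theorem lcs_mul_top_le_lcs_succ (k : ℕ) : lcs F br k * ⊤ ≤ lcs F br (k + 1) :=
  le_sup_right

end Bracket

theorem lcs_mul_lcs_le
    (F P : Type*) [Field F] [CommRing P] [Algebra F P] (m : ℕ)
    (br : AlternatingMap F P P (Fin (m + 2)))
    (hLeib : ∀ (u v : P) (x : Fin (m + 1) → P),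
      br (Fin.cons (u * v) x) = u * br (Fin.cons v x) + v * br (Fin.cons u x))
    (i j : ℕ) :
    lcs F (⇑br) i * lcs F (⇑br) j ≤ lcs F (⇑br) (i + j + 1) := by
  induction i generalizing j with
  | zero =>
    rw [Nat.zero_add, mul_comm]
    exact lcs_mul_top_le_lcs_succ br j
  | succ i ih =>
    rw [lcs_succ, Submodule.sup_mul, show i + 1 + j + 1 = i + j + 1 + 1 by omega]
    refine sup_le ?_ ?_
    · calc bk1 F br (lcs F br i) * lcs F br j
          ≤ bk1 F br (lcs F br i * lcs F br j) ⊔ lcs F br i * bk1 F br (lcs F br j) :=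
            bk1_mul_le_of_leibniz br hLeib _ _
        _ ≤ bk1 F br (lcs F br (i + j + 1)) ⊔ lcs F br i * lcs F br (j + 1) :=
            sup_le_sup (bk1_mono br (ih j))
              (mul_le_mul_right (bk1_lcs_le_lcs_succ br j) _)
        _ ≤ lcs F br (i + j + 1 + 1) :=
            sup_le (bk1_lcs_le_lcs_succ br _) (by simpa [Nat.add_assoc] using ih (j + 1))
    · calc lcs F br i * ⊤ * lcs F br j = lcs F br i * lcs F br j * ⊤ := by ring
        _ ≤ lcs F br (i + j + 1) * ⊤ := mul_le_mul_left (ih j) _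
        _ ≤ lcs F br (i + j + 1 + 1) := lcs_mul_top_le_lcs_succ br _
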